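/- arXiv:1101.0856 — 2 statements merged into one kernel-verified Lean document; each statement's English description precedes it below -/
import Mathlib

section
/- Let (g, [·,·], d) be a differential graded Lie algebra (d a degree +1 derivation with d² = 0). Define the derived bracket {a,b} = (−1)^{|a|+1} [d a, b] for homogeneous a, b. Then for all homogeneous a, b, c: {a, {b,c}} = {{a,b}, c} + (−1)^{(|a|+1)(|b|+1)} {b, {a,c}}. -/
/-! Since `d² = 0`, the differential of a derived bracket is a plain bracket,
`d{a,b} = [da,db]`. Unfolding both sides, every term becomes `±` a term of the graded
Jacobi identity for the elements `da, db` of degrees `|a|+1, |b|+1` and `c`, and the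
signs agree because `(−1)^{|a|+1}(−1)^{|b|+1} = (−1)^{|{a,b}|+1}`. -/

section DerivedBracket

variable {K g : Type*} [Field K] [AddCommGroup g] [Module K g]
  (br : g →ₗ[K] g →ₗ[K] g) (d : g →ₗ[K] g)

/-- The degree `i` of `a` is an explicit argument. -/
def derivedBracket (i : ℤ) (a b : g) : g :=
  ((-1 : K) ^ (i + 1)) • br (d a) b

variable {br d}

lemma neg_one_zpow_add_one_mul_zpow_add_one (i j : ℤ) :
    (-1 : K) ^ (i + 1) * (-1 : K) ^ (j + 1) = (-1 : K) ^ (i + j + 1 + 1) := by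
  rw [← zpow_add₀ (by norm_num)]
  ring_nf

lemma map_derivedBracket {𝒜 : ℤ → Submodule K g} (hd2 : ∀ a : g, d (d a) = 0)
    (hdbr : ∀ (i : ℤ) (a b : g), a ∈ 𝒜 i →
      d (br a b) = br (d a) b + ((-1 : K) ^ i) • br a (d b))
    {i : ℤ} {a : g} (hda : d a ∈ 𝒜 (i + 1)) (b : g) :
    d (derivedBracket br d i a b) = br (d a) (d b) := by
  have hsq : (-1 : K) ^ (i + 1) * (-1 : K) ^ (i + 1) = 1 := by
    rw [← zpow_add₀ (by norm_num), ← two_mul, zpow_mul]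
    norm_num
  rw [derivedBracket, map_smul, hdbr (i + 1) (d a) b hda, hd2, map_zero,
    LinearMap.zero_apply, zero_add, smul_smul, hsq, one_smul]

theorem derivedBracket_leibniz {𝒜 : ℤ → Submodule K g}
    (hjac : ∀ (i j : ℤ) (a b c : g), a ∈ 𝒜 i → b ∈ 𝒜 j →
      br a (br b c) = br (br a b) c + ((-1 : K) ^ (i * j)) • br b (br a c))
    (hddeg : ∀ (i : ℤ) (a : g), a ∈ 𝒜 i → d a ∈ 𝒜 (i + 1))
    (hd2 : ∀ a : g, d (d a) = 0)
    (hdbr : ∀ (i : ℤ) (a b : g), a ∈ 𝒜 i →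
      d (br a b) = br (d a) b + ((-1 : K) ^ i) • br a (d b))
    {i j : ℤ} {a b : g} (ha : a ∈ 𝒜 i) (hb : b ∈ 𝒜 j) (c : g) :
    derivedBracket br d i a (derivedBracket br d j b c)
      = derivedBracket br d (i + j + 1) (derivedBracket br d i a b) c
        + ((-1 : K) ^ ((i + 1) * (j + 1))) •
            derivedBracket br d j b (derivedBracket br d i a c) := by
  have hda := hddeg i a ha
  rw [derivedBracket.eq_1 br d (i + j + 1), map_derivedBracket hd2 hdbr hda]
  simp only [derivedBracket, map_smul, smul_smul]
  rw [hjac (i + 1) (j + 1) (d a) (d b) c hda (hddeg j b hb), smul_add, smul_smul,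
    neg_one_zpow_add_one_mul_zpow_add_one]
  congr 2
  rw [mul_comm ((-1 : K) ^ (j + 1)), neg_one_zpow_add_one_mul_zpow_add_one, mul_comm]

end DerivedBracket

theorem stmt3_general {K : Type*} [Field K]
    {g : Type*} [AddCommGroup g] [Module K g]
    (𝒜 : ℤ → Submodule K g)
    (br : g →ₗ[K] g →ₗ[K] g) (d : g →ₗ[K] g)
    (hjac : ∀ (i j : ℤ) (a b c : g), a ∈ 𝒜 i → b ∈ 𝒜 j →
      br a (br b c) = br (br a b) c + ((-1 : K) ^ (i * j)) • br b (br a c))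
    (hddeg : ∀ (i : ℤ) (a : g), a ∈ 𝒜 i → d a ∈ 𝒜 (i + 1))
    (hd2 : ∀ a : g, d (d a) = 0)
    (hdbr : ∀ (i : ℤ) (a b : g), a ∈ 𝒜 i →
      d (br a b) = br (d a) b + ((-1 : K) ^ i) • br a (d b))
    (i j : ℤ) (a b c : g) (ha : a ∈ 𝒜 i) (hb : b ∈ 𝒜 j) :
    ((-1 : K) ^ (i + 1)) • br (d a) (((-1 : K) ^ (j + 1)) • br (d b) c)
      = ((-1 : K) ^ (i + j + 1 + 1)) •
          br (d (((-1 : K) ^ (i + 1)) • br (d a) b)) c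
        + ((-1 : K) ^ ((i + 1) * (j + 1))) •
            (((-1 : K) ^ (j + 1)) • br (d b) (((-1 : K) ^ (i + 1)) • br (d a) c)) :=
  derivedBracket_leibniz hjac hddeg hd2 hdbr ha hb c

/-- In a differential graded Lie algebra `(g, [·,·], d)` (graded by submodules
`𝒜 i`), the derived bracket `{a,b} = (−1)^{|a|+1}[da, b]` satisfies the (left)
Leibniz identity with Koszul signs:
`{a,{b,c}} = {{a,b},c} + (−1)^{(|a|+1)(|b|+1)}{b,{a,c}}`. -/
theorem stmt3 {K : Type*} [Field K] [CharZero K]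
    {g : Type*} [AddCommGroup g] [Module K g]
    (𝒜 : ℤ → Submodule K g)
    (br : g →ₗ[K] g →ₗ[K] g) (d : g →ₗ[K] g)
    (hanti : ∀ (i j : ℤ) (a b : g), a ∈ 𝒜 i → b ∈ 𝒜 j →
      br a b = (-((-1 : K) ^ (i * j))) • br b a)
    (hjac : ∀ (i j : ℤ) (a b c : g), a ∈ 𝒜 i → b ∈ 𝒜 j →
      br a (br b c) = br (br a b) c + ((-1 : K) ^ (i * j)) • br b (br a c))
    (hbrdeg : ∀ (i j : ℤ) (a b : g), a ∈ 𝒜 i → b ∈ 𝒜 j → br a b ∈ 𝒜 (i + j))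
    (hddeg : ∀ (i : ℤ) (a : g), a ∈ 𝒜 i → d a ∈ 𝒜 (i + 1))
    (hd2 : ∀ a : g, d (d a) = 0)
    (hdbr : ∀ (i : ℤ) (a b : g), a ∈ 𝒜 i →
      d (br a b) = br (d a) b + ((-1 : K) ^ i) • br a (d b))
    (i j k : ℤ) (a b c : g) (ha : a ∈ 𝒜 i) (hb : b ∈ 𝒜 j) (hc : c ∈ 𝒜 k) :
    ((-1 : K) ^ (i + 1)) • br (d a) (((-1 : K) ^ (j + 1)) • br (d b) c)
      = ((-1 : K) ^ (i + j + 1 + 1)) •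
          br (d (((-1 : K) ^ (i + 1)) • br (d a) b)) c
        + ((-1 : K) ^ ((i + 1) * (j + 1))) •
            (((-1 : K) ^ (j + 1)) • br (d b) (((-1 : K) ^ (i + 1)) • br (d a) c)) :=
  stmt3_general 𝒜 br d hjac hddeg hd2 hdbr i j a b c ha hb
end

section
/- Let (g, [·,·], d) be a differential graded Lie algebra and let V = g_{−1} be its degree −1 component. Then the derived bracket {a,b} = [da, b] restricted to V takes values in V and makes V a left Leibniz algebra: {a,{b,c}} = {{a,b},c} + {b,{a,c}}, and moreover {a,b} + {b,a} = d[a,b] for all a,b,c ∈ V. -/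
/-!
Since `d² = 0` and `d` raises degree by one, `x ↦ [da, x]` for `a ∈ g_{-1}` is the adjoint action of
the degree-`0` element `da`. The graded Jacobi identity between degree-`0` elements carries no sign,
so `[da, -]` is a derivation of the bracket; the Leibniz rule for `d` together with `d(da) = 0` turns
`[da, [db, c]]` into `[d[da, b], c] + [db, [da, c]]`. The symmetric part comes from the Leibniz rule
for `d` applied to `[a, b]` and graded antisymmetry of `[a, db]`, whose signs agree in degree `-1`.
-/

section DerivedBracket

variable {K g : Type*} [Field K] [AddCommGroup g] [Module K g]
  {𝒜 : ℤ → Submodule K g} {br : g →ₗ[K] g →ₗ[K] g} {d : g →ₗ[K] g}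

theorem d_br_d_eq_br_d_d
    (hddeg : ∀ (i : ℤ) (a : g), a ∈ 𝒜 i → d a ∈ 𝒜 (i + 1))
    (hd2 : ∀ a : g, d (d a) = 0)
    (hdbr : ∀ (i : ℤ) (a b : g), a ∈ 𝒜 i →
      d (br a b) = br (d a) b + ((-1 : K) ^ i) • br a (d b))
    {i : ℤ} {a : g} (ha : a ∈ 𝒜 i) (b : g) :
    d (br (d a) b) = ((-1 : K) ^ (i + 1)) • br (d a) (d b) := by
  rw [hdbr (i + 1) (d a) b (hddeg i a ha), hd2, map_zero, LinearMap.zero_apply, zero_add]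

theorem br_br_of_mem_zero
    (hjac : ∀ (i j : ℤ) (a b c : g), a ∈ 𝒜 i → b ∈ 𝒜 j →
      br a (br b c) = br (br a b) c + ((-1 : K) ^ (i * j)) • br b (br a c))
    {x y : g} (hx : x ∈ 𝒜 0) (hy : y ∈ 𝒜 0) (c : g) :
    br x (br y c) = br (br x y) c + br y (br x c) := by
  simpa using hjac 0 0 x y c hx hy

theorem br_d_add_br_d_eq_d_br
    (hanti : ∀ (i j : ℤ) (a b : g), a ∈ 𝒜 i → b ∈ 𝒜 j →
      br a b = (-((-1 : K) ^ (i * j))) • br b a)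
    (hdbr : ∀ (i : ℤ) (a b : g), a ∈ 𝒜 i →
      d (br a b) = br (d a) b + ((-1 : K) ^ i) • br a (d b))
    {a b : g} (ha : a ∈ 𝒜 (-1)) (hdb : d b ∈ 𝒜 0) :
    br (d a) b + br (d b) a = d (br a b) := by
  rw [hdbr (-1) a b ha, hanti (-1) 0 a (d b) ha hdb]
  norm_num

end DerivedBracket

theorem stmt6_general {K : Type*} [Field K]
    {g : Type*} [AddCommGroup g] [Module K g]
    (𝒜 : ℤ → Submodule K g)
    (br : g →ₗ[K] g →ₗ[K] g) (d : g →ₗ[K] g)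
    (hanti : ∀ (i j : ℤ) (a b : g), a ∈ 𝒜 i → b ∈ 𝒜 j →
      br a b = (-((-1 : K) ^ (i * j))) • br b a)
    (hjac : ∀ (i j : ℤ) (a b c : g), a ∈ 𝒜 i → b ∈ 𝒜 j →
      br a (br b c) = br (br a b) c + ((-1 : K) ^ (i * j)) • br b (br a c))
    (hbrdeg : ∀ (i j : ℤ) (a b : g), a ∈ 𝒜 i → b ∈ 𝒜 j → br a b ∈ 𝒜 (i + j))
    (hddeg : ∀ (i : ℤ) (a : g), a ∈ 𝒜 i → d a ∈ 𝒜 (i + 1))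
    (hd2 : ∀ a : g, d (d a) = 0)
    (hdbr : ∀ (i : ℤ) (a b : g), a ∈ 𝒜 i →
      d (br a b) = br (d a) b + ((-1 : K) ^ i) • br a (d b))
    (a b c : g) (ha : a ∈ 𝒜 (-1)) (hb : b ∈ 𝒜 (-1)) :
    br (d a) b ∈ 𝒜 (-1)
    ∧ br (d a) (br (d b) c) = br (d (br (d a) b)) c + br (d b) (br (d a) c)
    ∧ br (d a) b + br (d b) a = d (br a b) := by
  have hda : d a ∈ 𝒜 0 := by simpa using hddeg (-1) a ha
  have hdb : d b ∈ 𝒜 0 := by simpa using hddeg (-1) b hb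
  have hd_bracket : d (br (d a) b) = br (d a) (d b) := by
    simpa using d_br_d_eq_br_d_d hddeg hd2 hdbr ha b
  refine ⟨by simpa using hbrdeg 0 (-1) (d a) b hda hb, ?_,
    br_d_add_br_d_eq_d_br hanti hdbr ha hdb⟩
  rw [hd_bracket]
  exact br_br_of_mem_zero hjac hda hdb c

/-- In a DGLA, the derived bracket `{a,b} = [da,b]` on the degree `−1` component
`V = g_{−1}` takes values in `V`, satisfies the left Leibniz identity, and
`{a,b} + {b,a} = d[a,b]`. -/
theorem stmt6 {K : Type*} [Field K] [CharZero K]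
    {g : Type*} [AddCommGroup g] [Module K g]
    (𝒜 : ℤ → Submodule K g)
    (br : g →ₗ[K] g →ₗ[K] g) (d : g →ₗ[K] g)
    (hanti : ∀ (i j : ℤ) (a b : g), a ∈ 𝒜 i → b ∈ 𝒜 j →
      br a b = (-((-1 : K) ^ (i * j))) • br b a)
    (hjac : ∀ (i j : ℤ) (a b c : g), a ∈ 𝒜 i → b ∈ 𝒜 j →
      br a (br b c) = br (br a b) c + ((-1 : K) ^ (i * j)) • br b (br a c))
    (hbrdeg : ∀ (i j : ℤ) (a b : g), a ∈ 𝒜 i → b ∈ 𝒜 j → br a b ∈ 𝒜 (i + j))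
    (hddeg : ∀ (i : ℤ) (a : g), a ∈ 𝒜 i → d a ∈ 𝒜 (i + 1))
    (hd2 : ∀ a : g, d (d a) = 0)
    (hdbr : ∀ (i : ℤ) (a b : g), a ∈ 𝒜 i →
      d (br a b) = br (d a) b + ((-1 : K) ^ i) • br a (d b))
    (a b c : g) (ha : a ∈ 𝒜 (-1)) (hb : b ∈ 𝒜 (-1)) (hc : c ∈ 𝒜 (-1)) :
    br (d a) b ∈ 𝒜 (-1)
    ∧ br (d a) (br (d b) c) = br (d (br (d a) b)) c + br (d b) (br (d a) c)
    ∧ br (d a) b + br (d b) a = d (br a b) :=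
  stmt6_general 𝒜 br d hanti hjac hbrdeg hddeg hd2 hdbr a b c ha hb
end
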